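/- Lemma (existence of a critical edge, the paper's conditions (3.20) in the proof of Claim 3.5). Let r be an order with levels on X, let (τ₀, ω₀) be a persistence pair of r, let ε > 0, and let ω̃ be an n-simplex with ω̃ ∈ OV(r, ω₀) but ω̃ ∉ SV_ε(r, τ₀, ω₀). Then there exists τ̃ ∈ X^(n−1) such that τ₀ ≺_r τ̃, r̂(τ₀) ≤ r̂(τ̃) < r̂(τ₀) + ε, ω̃ ∉ K_V(G(≻_r τ̃), ω₀), and ω̃ ∈ K_V(G(⪰_r τ̃), ω₀). -/

import Mathlib

open scoped Classical

namespace StableVol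

/-- A finite abstract simplicial complex of dimension `n`: a finite family of nonempty
finite subsets of the vertex set, closed under nonempty subsets, in which every element
is contained in an element of cardinality `n+1`. -/
structure NComplex (V : Type*) [DecidableEq V] (n : ℕ) where
  X : Finset (Finset V)
  nonempty_mem : ∀ σ ∈ X, σ.Nonempty
  down_closed : ∀ σ ∈ X, ∀ σ' : Finset V, σ' ⊆ σ → σ'.Nonempty → σ' ∈ X
  contained_top : ∀ σ ∈ X, ∃ ω ∈ X, σ ⊆ ω ∧ ω.card = n + 1

variable {V : Type*} [DecidableEq V] {n : ℕ}

/-- An `n`-cell is either an `n`-simplex (`some ω`) or the formal cell `ω∞` (`none`). -/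
abbrev Cell (V : Type*) := Option (Finset V)

/-- `τ` is a face of the cell `c`.  For `c = some ω` this means that `ω` is an
`n`-simplex of `X` containing `τ`; the faces of `ω∞ = none` are the `(n-1)`-simplices
having exactly one `n`-simplex coface. -/
def faceCell (C : NComplex V n) (τ : Finset V) : Cell V → Prop
  | some ω => ω ∈ C.X ∧ ω.card = n + 1 ∧ τ ⊆ ω
  | none => {ω | ω ∈ C.X ∧ ω.card = n + 1 ∧ τ ⊆ ω}.ncard = 1

def IsCell (C : NComplex V n) : Cell V → Prop
  | some ω => ω ∈ C.X ∧ ω.card = n + 1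
  | none => True

/-- Adjacency in the dual graph, restricted to the edge set `E ⊆ X^(n-1)`. -/
def adj (C : NComplex V n) (E : Set (Finset V)) (c c' : Cell V) : Prop :=
  ∃ τ ∈ E, faceCell C τ c ∧ faceCell C τ c' ∧ c ≠ c'

/-- `KV C E c₀`: the set of `n`-cells in the connected component of `c₀` in the
subgraph of the dual graph with edge set `E`. -/
def KV (C : NComplex V n) (E : Set (Finset V)) (c₀ : Cell V) : Set (Cell V) :=
  {c | Relation.ReflTransGen (adj C E) c₀ c}

/-- Every `(n-1)`-simplex of `X` is a face of exactly two `n`-cells. -/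
def TwoCofaces (C : NComplex V n) : Prop :=
  ∀ τ ∈ C.X, τ.card = n →
    ∃ c₁ c₂ : Cell V, c₁ ≠ c₂ ∧ ∀ c : Cell V, faceCell C τ c ↔ (c = c₁ ∨ c = c₂)

/-- The dual graph (with full edge set `X^(n-1)`) is connected. -/
def DualConn (C : NComplex V n) : Prop :=
  ∀ c c' : Cell V, IsCell C c → IsCell C c' →
    c' ∈ KV C {τ | τ ∈ C.X ∧ τ.card = n} c

/-- A level function: monotone with respect to strict inclusion of simplices. -/
def IsLevelFun (C : NComplex V n) (lev : Finset V → ℝ) : Prop :=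
  ∀ σ ∈ C.X, ∀ σ' ∈ C.X, σ ⊂ σ' → lev σ ≤ lev σ'

/-- `(lev, slt)` is an order with levels on `X`: `lev` is a level function and `slt`
is (the strict form of) a linear order on `X` refining both `lev` and strict
inclusion. -/
def IsOWL (C : NComplex V n) (lev : Finset V → ℝ)
    (slt : Finset V → Finset V → Prop) : Prop :=
  IsLevelFun C lev ∧
  (∀ σ ∈ C.X, ¬ slt σ σ) ∧
  (∀ σ ∈ C.X, ∀ σ' ∈ C.X, ∀ σ'' ∈ C.X, slt σ σ' → slt σ' σ'' → slt σ σ'') ∧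
  (∀ σ ∈ C.X, ∀ σ' ∈ C.X, σ ≠ σ' → slt σ σ' ∨ slt σ' σ) ∧
  (∀ σ ∈ C.X, ∀ σ' ∈ C.X, slt σ σ' → lev σ ≤ lev σ') ∧
  (∀ σ ∈ C.X, ∀ σ' ∈ C.X, σ ⊂ σ' → slt σ σ')

/-- Extension of a strict order on simplices to `n`-cells, `ω∞ = none` being the
unique maximum. -/
def cslt (slt : Finset V → Finset V → Prop) : Cell V → Cell V → Prop
  | some σ, some σ' => slt σ σ'
  | some _, none => True
  | none, _ => False

/-- `m` is the maximum cell of the set `S` with respect to the order `slt`. -/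
def IsMaxCell (slt : Finset V → Finset V → Prop) (S : Set (Cell V)) (m : Cell V) :
    Prop :=
  m ∈ S ∧ ∀ c ∈ S, c ≠ m → cslt slt c m

/-- Edge set of `G(≻ σ₀)`: the `(n-1)`-simplices strictly above `σ₀`. -/
def Egt (C : NComplex V n) (slt : Finset V → Finset V → Prop) (σ₀ : Finset V) :
    Set (Finset V) :=
  {τ | τ ∈ C.X ∧ τ.card = n ∧ slt σ₀ τ}

/-- Edge set of `G(⪰ σ₀)`. -/
def Ege (C : NComplex V n) (slt : Finset V → Finset V → Prop) (σ₀ : Finset V) :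
    Set (Finset V) :=
  {τ | τ ∈ C.X ∧ τ.card = n ∧ (τ = σ₀ ∨ slt σ₀ τ)}

/-- Edge set of `G(lev ≥ s)`. -/
def Elev (C : NComplex V n) (lev : Finset V → ℝ) (s : ℝ) : Set (Finset V) :=
  {τ | τ ∈ C.X ∧ τ.card = n ∧ s ≤ lev τ}

/-- `(τ₀, ω₀)` is a persistence pair of the order `slt`: the two `n`-cells having
`τ₀` as a face lie in distinct connected components of `G(≻ τ₀)`, and `ω₀` is the
smaller of the two maximum cells of these two components. -/
def IsPersPair (C : NComplex V n) (slt : Finset V → Finset V → Prop)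
    (τ₀ ω₀ : Finset V) : Prop :=
  τ₀ ∈ C.X ∧ τ₀.card = n ∧ ω₀ ∈ C.X ∧ ω₀.card = n + 1 ∧
  ∃ c₁ c₂ : Cell V, c₁ ≠ c₂ ∧ faceCell C τ₀ c₁ ∧ faceCell C τ₀ c₂ ∧
    c₂ ∉ KV C (Egt C slt τ₀) c₁ ∧
    ∃ m₂ : Cell V,
      IsMaxCell slt (KV C (Egt C slt τ₀) c₁) (some ω₀) ∧
      IsMaxCell slt (KV C (Egt C slt τ₀) c₂) m₂ ∧
      cslt slt (some ω₀) m₂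

/-- The optimal volume `OV(q, ω₀) = K_V(G(≻_q τ_{q,ω₀}), ω₀)`. -/
def OV (C : NComplex V n) (slt : Finset V → Finset V → Prop) (ω₀ : Finset V) :
    Set (Cell V) :=
  {c | ∃ τ, IsPersPair C slt τ ω₀ ∧ c ∈ KV C (Egt C slt τ) (some ω₀)}

/-- The stable volume `SV_ε(r, τ₀, ω₀) = K_V(G(r̂ ≥ r̂(τ₀) + ε), ω₀)`. -/
def SV (C : NComplex V n) (lev : Finset V → ℝ) (τ₀ ω₀ : Finset V) (ε : ℝ) :
    Set (Cell V) :=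
  KV C (Elev C lev (lev τ₀ + ε)) (some ω₀)

/-- `(qlev, qslt) ∈ R_ε`: an order with levels uniformly `ε/2`-close to `rlev`
satisfying the `(r, ω₀)`-order condition. -/
def InR (C : NComplex V n) (rlev : Finset V → ℝ)
    (rslt : Finset V → Finset V → Prop) (ω₀ : Finset V) (ε : ℝ)
    (qlev : Finset V → ℝ) (qslt : Finset V → Finset V → Prop) : Prop :=
  IsOWL C qlev qslt ∧ (∀ σ ∈ C.X, |qlev σ - rlev σ| < ε / 2) ∧
  (∀ σ ∈ C.X, rslt σ ω₀ → qslt σ ω₀)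

/-- `F_{ε,n}`: the `n`-simplices with level at least `lev τ₀ + ε` that precede `ω₀`. -/
def Fcells (C : NComplex V n) (lev : Finset V → ℝ)
    (slt : Finset V → Finset V → Prop) (τ₀ ω₀ : Finset V) (ε : ℝ) :
    Set (Finset V) :=
  {σ | σ ∈ C.X ∧ σ.card = n + 1 ∧ lev τ₀ + ε ≤ lev σ ∧ slt σ ω₀}

/-- `F_{ε,n-1}`: the `(n-1)`-simplices with level at least `lev τ₀ + ε` that
precede `ω₀`. -/
def Fedges (C : NComplex V n) (lev : Finset V → ℝ)
    (slt : Finset V → Finset V → Prop) (τ₀ ω₀ : Finset V) (ε : ℝ) :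
    Set (Finset V) :=
  {σ | σ ∈ C.X ∧ σ.card = n ∧ lev τ₀ + ε ≤ lev σ ∧ slt σ ω₀}

/-- `τ*(∂z)`: the `ℤ/2ℤ`-sum of the coefficients of `z` over the `n`-simplex
cofaces of `τ`. -/
def bsum (C : NComplex V n) (τ : Finset V) (z : Finset V → ZMod 2) : ZMod 2 :=
  ∑ ω ∈ C.X.filter (fun ω => ω.card = n + 1 ∧ τ ⊆ ω), z ω

/-- A feasible chain `z = ω₀ + Σ_{ω ∈ F_{ε,n}} α_ω ω` with `τ*(∂z) = 0` for all
`τ ∈ F_{ε,n-1}`. -/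
def IsFeasible (C : NComplex V n) (lev : Finset V → ℝ)
    (slt : Finset V → Finset V → Prop) (τ₀ ω₀ : Finset V) (ε : ℝ)
    (z : Finset V → ZMod 2) : Prop :=
  z ω₀ = 1 ∧
  (∀ ω : Finset V, ω ≠ ω₀ → ω ∉ Fcells C lev slt τ₀ ω₀ ε → z ω = 0) ∧
  (∀ τ ∈ Fedges C lev slt τ₀ ω₀ ε, bsum C τ z = 0)

/-- `‖z‖₀`: the number of simplices of `X` with nonzero coefficient in `z`. -/
def norm0 (C : NComplex V n) (z : Finset V → ZMod 2) : ℕ :=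
  (C.X.filter fun ω => z ω ≠ 0).card

/-- The level function of the perturbed order `q(r, η, A)`. -/
noncomputable def pertLev (C : NComplex V n) (rlev : Finset V → ℝ) (η : ℝ)
    (A : Set (Finset V)) : Finset V → ℝ :=
  fun σ => if (σ ∈ C.X ∧ σ.card = n + 1) ∨ σ ∈ A then rlev σ + η else rlev σ - η

/-- The strict order of the perturbed order `q(r, η, A)`. -/
def pertSlt (C : NComplex V n) (rlev : Finset V → ℝ)
    (rslt : Finset V → Finset V → Prop) (η : ℝ) (A : Set (Finset V)) :
    Finset V → Finset V → Prop :=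
  fun σ σ' => pertLev C rlev η A σ < pertLev C rlev η A σ' ∨
    (pertLev C rlev η A σ = pertLev C rlev η A σ' ∧ rslt σ σ')

/-- The `(n-1)`-simplices that are edges of the connected component of `c₀` in the
subgraph with edge set `E`. -/
def compEdges (C : NComplex V n) (E : Set (Finset V)) (c₀ : Cell V) :
    Set (Finset V) :=
  {τ | τ ∈ E ∧ ∃ c, faceCell C τ c ∧ c ∈ KV C E c₀}

/-- `IsPath C E c c' vs es`: `vs` is the vertex list and `es` the edge list of a walk
from `c` to `c'` in the subgraph of the dual graph with edge set `E`. -/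
inductive IsPath (C : NComplex V n) (E : Set (Finset V)) :
    Cell V → Cell V → List (Cell V) → List (Finset V) → Prop
  | nil (c : Cell V) : IsPath C E c c [c] []
  | cons {c c' c'' : Cell V} {vs : List (Cell V)} {es : List (Finset V)}
      {τ : Finset V} : τ ∈ E → faceCell C τ c → faceCell C τ c' → c ≠ c' →
      IsPath C E c' c'' vs es → IsPath C E c c'' (c :: vs) (τ :: es)

/-!
Take the `(n-1)`-simplices `τ ⪰ τ₀` for which `ω̃` is still joined to `ω₀` in `G(⪰ τ)`; `τ₀` is
one of them, because persistence pairs are determined by their `n`-simplex, so `OV(r, ω₀)` is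
the component of `ω₀` in `G(≻ τ₀)`. The `≼_r`-largest such `τ̃` is the critical edge: a path from
`ω₀` to `ω̃` in `G(≻ τ̃)` would lie in `G(⪰ τ')` for its smallest edge `τ' ≻ τ̃`. Since
`ω̃ ∈ OV(r, ω₀)`, `τ̃ ≠ τ₀`, and `r̂(τ̃) < r̂(τ₀) + ε` because otherwise `G(⪰ τ̃) ⊆ G(r̂ ≥ r̂(τ₀) + ε)`
would put `ω̃` into `SV_ε(r, τ₀, ω₀)`.
-/

theorem _root_.Finset.exists_greatest_of_total {α : Type*} [DecidableEq α] (r : α → α → Prop)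
    {s : Finset α} (htotal : ∀ a ∈ s, ∀ b ∈ s, a ≠ b → r a b ∨ r b a)
    (htrans : ∀ a ∈ s, ∀ b ∈ s, ∀ c ∈ s, r a b → r b c → r a c) (hs : s.Nonempty) :
    ∃ m ∈ s, ∀ b ∈ s, b ≠ m → r b m := by
  induction s using Finset.induction_on with
  | empty => simp at hs
  | insert a s ha ih =>
    rcases s.eq_empty_or_nonempty with rfl | hs'
    · exact ⟨a, by simp, by simp⟩
    have hsub : s ⊆ insert a s := Finset.subset_insert a s
    obtain ⟨m, hm, hmax⟩ := ih (fun x hx y hy => htotal x (hsub hx) y (hsub hy))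
      (fun x hx y hy z hz => htrans x (hsub hx) y (hsub hy) z (hsub hz)) hs'
    have ham : a ≠ m := by rintro rfl; exact ha hm
    rcases htotal a (by simp) m (hsub hm) ham with ham | hma
    · refine ⟨m, hsub hm, fun b hb hbm => ?_⟩
      rcases Finset.mem_insert.1 hb with rfl | hb
      exacts [ham, hmax b hb hbm]
    · refine ⟨a, by simp, fun b hb hba => ?_⟩
      have hb : b ∈ s := (Finset.mem_insert.1 hb).resolve_left hba
      rcases eq_or_ne b m with rfl | hbm
      exacts [hma, htrans b (hsub hb) m (hsub hm) a (by simp) (hmax b hb hbm) hma]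

variable {C : NComplex V n}

section Components

variable {E E' : Set (Finset V)} {c c' : Cell V}

lemma adj_mono (h : E ⊆ E') (hadj : adj C E c c') : adj C E' c c' :=
  let ⟨τ, hτ, hf, hf', hne⟩ := hadj
  ⟨τ, h hτ, hf, hf', hne⟩

lemma adj_symm (hadj : adj C E c c') : adj C E c' c :=
  let ⟨τ, hτ, hf, hf', hne⟩ := hadj
  ⟨τ, hτ, hf', hf, hne.symm⟩

lemma KV_mono (h : E ⊆ E') (c : Cell V) : KV C E c ⊆ KV C E' c :=
  fun _ hc => Relation.ReflTransGen.mono (fun _ _ => adj_mono h) _ _ hc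

lemma KV_subset_of_mem (h : c' ∈ KV C E c) : KV C E c' ⊆ KV C E c :=
  fun _ hd => Relation.ReflTransGen.trans h hd

lemma KV_symm (h : c' ∈ KV C E c) : c ∈ KV C E c' :=
  haveI : Std.Symm (adj C E) := ⟨fun _ _ => adj_symm⟩
  Std.Symm.symm (r := Relation.ReflTransGen (adj C E)) _ _ h

lemma isCell_of_faceCell {τ : Finset V} (h : faceCell C τ c) : IsCell C c := by
  cases c with
  | none => trivial
  | some ω => exact ⟨h.1, h.2.1⟩

lemma isCell_of_mem_KV (hc : IsCell C c) (h : c' ∈ KV C E c) : IsCell C c' := by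
  induction h with
  | refl => exact hc
  | tail _ hadj _ => exact isCell_of_faceCell hadj.choose_spec.2.2.1

end Components

section OrderWithLevels

variable {lev : Finset V → ℝ} {slt : Finset V → Finset V → Prop}

lemma IsOWL.irrefl (hr : IsOWL C lev slt) {σ : Finset V} (hσ : σ ∈ C.X) : ¬ slt σ σ :=
  hr.2.1 σ hσ

lemma IsOWL.trans (hr : IsOWL C lev slt) {σ σ' σ'' : Finset V} (hσ : σ ∈ C.X)
    (hσ' : σ' ∈ C.X) (hσ'' : σ'' ∈ C.X) : slt σ σ' → slt σ' σ'' → slt σ σ'' :=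
  hr.2.2.1 σ hσ σ' hσ' σ'' hσ''

lemma IsOWL.total (hr : IsOWL C lev slt) {σ σ' : Finset V} (hσ : σ ∈ C.X) (hσ' : σ' ∈ C.X)
    (hne : σ ≠ σ') : slt σ σ' ∨ slt σ' σ :=
  hr.2.2.2.1 σ hσ σ' hσ' hne

lemma IsOWL.lev_le (hr : IsOWL C lev slt) {σ σ' : Finset V} (hσ : σ ∈ C.X) (hσ' : σ' ∈ C.X)
    (h : slt σ σ') : lev σ ≤ lev σ' :=
  hr.2.2.2.2.1 σ hσ σ' hσ' h

lemma IsOWL.cslt_asymm (hr : IsOWL C lev slt) {σ : Finset V} (hσ : σ ∈ C.X) {m : Cell V}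
    (hm : IsCell C m) (h : cslt slt (some σ) m) : ¬ cslt slt m (some σ) := by
  cases m with
  | none => exact id
  | some ω => exact fun h' => hr.irrefl hσ (hr.trans hσ hm.1 hσ h h')

lemma Egt_subset_Ege (σ : Finset V) : Egt C slt σ ⊆ Ege C slt σ :=
  fun _ ⟨hX, hcard, h⟩ => ⟨hX, hcard, .inr h⟩

lemma Ege_subset_Egt_of_rel (hr : IsOWL C lev slt) {σ σ' : Finset V} (hσ : σ ∈ C.X)
    (hσ' : σ' ∈ C.X) (h : slt σ σ') : Ege C slt σ' ⊆ Egt C slt σ := by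
  rintro τ ⟨hτ, hcard, rfl | h'⟩
  exacts [⟨hτ, hcard, h⟩, ⟨hτ, hcard, hr.trans hσ hσ' hτ h h'⟩]

lemma Egt_subset_Egt_of_mem_Ege (hr : IsOWL C lev slt) {σ τ : Finset V} (hσ : σ ∈ C.X)
    (hτ : τ ∈ Ege C slt σ) : Egt C slt τ ⊆ Egt C slt σ := by
  obtain ⟨hτX, -, rfl | h⟩ := hτ
  exacts [subset_rfl, (Egt_subset_Ege τ).trans (Ege_subset_Egt_of_rel hr hσ hτX h)]

lemma Ege_subset_Elev (hr : IsOWL C lev slt) {τ : Finset V} (hτ : τ ∈ C.X) {s : ℝ}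
    (hs : s ≤ lev τ) : Ege C slt τ ⊆ Elev C lev s := by
  rintro τ' ⟨hτ', hcard, rfl | h⟩
  exacts [⟨hτ', hcard, hs⟩, ⟨hτ', hcard, hs.trans (hr.lev_le hτ hτ' h)⟩]

/-- Every path in `G(≻ σ)` lies in `G(⪰ τ)` for its smallest edge `τ`. -/
lemma eq_or_exists_mem_KV_Ege_of_mem_KV_Egt (hr : IsOWL C lev slt) {σ : Finset V}
    {c c' : Cell V} (h : c' ∈ KV C (Egt C slt σ) c) :
    c' = c ∨ ∃ τ ∈ Egt C slt σ, c' ∈ KV C (Ege C slt τ) c := by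
  induction h with
  | refl => exact .inl rfl
  | @tail b d _ hadj ih =>
    obtain ⟨τ, hτ, hf, hf', hne⟩ := hadj
    have hττ : τ ∈ Ege C slt τ := ⟨hτ.1, hτ.2.1, .inl rfl⟩
    obtain ⟨τ', hτ', hb, hττ'⟩ :
        ∃ τ' ∈ Egt C slt σ, b ∈ KV C (Ege C slt τ') c ∧ τ ∈ Ege C slt τ' := by
      rcases ih with rfl | ⟨τ', hτ', hb⟩
      · exact ⟨τ, hτ, .refl, hττ⟩
      rcases eq_or_ne τ τ' with rfl | hne'
      · exact ⟨τ, hτ, hb, hττ⟩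
      rcases hr.total hτ.1 hτ'.1 hne' with hlt | hlt
      · exact ⟨τ, hτ, KV_mono ((Ege_subset_Egt_of_rel hr hτ.1 hτ'.1 hlt).trans
          (Egt_subset_Ege τ)) c hb, hττ⟩
      · exact ⟨τ', hτ', hb, hτ.1, hτ.2.1, .inr hlt⟩
    exact .inr ⟨τ', hτ', Relation.ReflTransGen.tail hb ⟨τ, hττ', hf, hf', hne⟩⟩

lemma exists_critical_of_mem_KV_Ege (hr : IsOWL C lev slt) {σ₀ : Finset V}
    (hσ₀ : σ₀ ∈ C.X) (hσ₀n : σ₀.card = n) {c c' : Cell V} (hne : c' ≠ c)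
    (h : c' ∈ KV C (Ege C slt σ₀) c) :
    ∃ τ ∈ Ege C slt σ₀, c' ∉ KV C (Egt C slt τ) c ∧ c' ∈ KV C (Ege C slt τ) c := by
  set S := C.X.filter fun τ => τ ∈ Ege C slt σ₀ ∧ c' ∈ KV C (Ege C slt τ) c
  have hSX : ∀ τ ∈ S, τ ∈ C.X := fun τ hτ => (Finset.mem_filter.1 hτ).1
  obtain ⟨τ, hτS, hτmax⟩ := Finset.exists_greatest_of_total slt
    (fun a ha b hb => hr.total (hSX a ha) (hSX b hb))
    (fun a ha b hb d hd => hr.trans (hSX a ha) (hSX b hb) (hSX d hd))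
    ⟨σ₀, Finset.mem_filter.2 ⟨hσ₀, ⟨hσ₀, hσ₀n, .inl rfl⟩, h⟩⟩
  obtain ⟨hτX, hτσ₀, hτc⟩ := Finset.mem_filter.1 hτS
  refine ⟨τ, hτσ₀, fun hgt => ?_, hτc⟩
  obtain ⟨τ', hτ', hτ'c⟩ := (eq_or_exists_mem_KV_Ege_of_mem_KV_Egt hr hgt).resolve_left hne
  have hτ'S : τ' ∈ S := Finset.mem_filter.2
    ⟨hτ'.1, Egt_subset_Ege σ₀ (Egt_subset_Egt_of_mem_Ege hr hσ₀ hτσ₀ hτ'), hτ'c⟩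
  have hτ'τ : τ' ≠ τ := by rintro rfl; exact hr.irrefl hτX hτ'.2.2
  exact hr.irrefl hτX (hr.trans hτX hτ'.1 hτX hτ'.2.2 (hτmax τ' hτ'S hτ'τ))

/-- Persistence pairs with the same `n`-simplex `ω₀` cannot have `a ≺ b`: the component of
`G(≻ a)` whose maximum is `ω₀` would contain the whole edge `b` and hence the maximum of the
other component of `G(≻ b)` at `b`, which lies above `ω₀`. -/
lemma IsPersPair.not_rel (hr : IsOWL C lev slt) {a b ω₀ : Finset V} (hab : slt a b)
    (ha : IsPersPair C slt a ω₀) (hb : IsPersPair C slt b ω₀) : False := by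
  obtain ⟨haX, -, hω₀X, -, c₁, -, -, -, -, -, -, hmax, -, -⟩ := ha
  obtain ⟨hbX, hbn, -, -, d₁, d₂, hd, hfd₁, hfd₂, -, m₂, hmax₁, hmax₂, hlt⟩ := hb
  have hsub : Egt C slt b ⊆ Egt C slt a :=
    (Egt_subset_Ege b).trans (Ege_subset_Egt_of_rel hr haX hbX hab)
  have hd₁ : d₁ ∈ KV C (Egt C slt a) c₁ :=
    KV_subset_of_mem hmax.1 (KV_symm (KV_mono hsub d₁ hmax₁.1))
  have hd₂ : d₂ ∈ KV C (Egt C slt a) c₁ :=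
    Relation.ReflTransGen.tail hd₁ ⟨b, ⟨hbX, hbn, hab⟩, hfd₁, hfd₂, hd⟩
  have hm₂ : m₂ ∈ KV C (Egt C slt a) c₁ := KV_subset_of_mem hd₂ (KV_mono hsub d₂ hmax₂.1)
  have hm₂ω₀ : m₂ ≠ some ω₀ := by rintro rfl; exact hr.irrefl hω₀X hlt
  exact hr.cslt_asymm hω₀X (isCell_of_mem_KV (isCell_of_faceCell hfd₂) hmax₂.1) hlt
    (hmax.2 m₂ hm₂ hm₂ω₀)

lemma IsPersPair.eq (hr : IsOWL C lev slt) {a b ω₀ : Finset V}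
    (ha : IsPersPair C slt a ω₀) (hb : IsPersPair C slt b ω₀) : a = b := by
  by_contra hne
  rcases hr.total ha.1 hb.1 hne with h | h
  exacts [ha.not_rel hr h hb, hb.not_rel hr h ha]

end OrderWithLevels

theorem exists_critical_edge_general
    (C : NComplex V n)
    (rlev : Finset V → ℝ) (rslt : Finset V → Finset V → Prop)
    (hr : IsOWL C rlev rslt)
    (τ₀ ω₀ : Finset V) (hpair : IsPersPair C rslt τ₀ ω₀)
    (ε : ℝ)
    (ωt : Finset V)
    (hOV : (some ωt : Cell V) ∈ OV C rslt ω₀)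
    (hSV : (some ωt : Cell V) ∉ SV C rlev τ₀ ω₀ ε) :
    ∃ τt : Finset V, τt ∈ C.X ∧ τt.card = n ∧ rslt τ₀ τt ∧
      rlev τ₀ ≤ rlev τt ∧ rlev τt < rlev τ₀ + ε ∧
      (some ωt : Cell V) ∉ KV C (Egt C rslt τt) (some ω₀) ∧
      (some ωt : Cell V) ∈ KV C (Ege C rslt τt) (some ω₀) := by
  obtain ⟨τ, hτ, hOV⟩ := hOV
  rw [hτ.eq hr hpair] at hOV
  have hne : (some ωt : Cell V) ≠ some ω₀ := fun h => hSV (h ▸ Relation.ReflTransGen.refl)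
  obtain ⟨τt, ⟨hτtX, hτtn, hτ₀τt⟩, hgt, hge⟩ := exists_critical_of_mem_KV_Ege hr hpair.1
    hpair.2.1 hne (KV_mono (Egt_subset_Ege τ₀) _ hOV)
  have hlt : rslt τ₀ τt := hτ₀τt.resolve_left (by rintro rfl; exact hgt hOV)
  refine ⟨τt, hτtX, hτtn, hlt, hr.lev_le hpair.1 hτtX hlt, ?_, hgt, hge⟩
  by_contra! hlev
  exact hSV (KV_mono (Ege_subset_Elev hr hτtX hlev) _ hge)

/-- existence of a critical edge, conditions (3.20) in the proof of
Claim 3.5. -/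
theorem exists_critical_edge
    (hn : 2 ≤ n) (C : NComplex V n) (htwo : TwoCofaces C) (hconn : DualConn C)
    (rlev : Finset V → ℝ) (rslt : Finset V → Finset V → Prop)
    (hr : IsOWL C rlev rslt)
    (τ₀ ω₀ : Finset V) (hpair : IsPersPair C rslt τ₀ ω₀)
    (ε : ℝ) (hε : 0 < ε)
    (ωt : Finset V) (hωtX : ωt ∈ C.X) (hωtc : ωt.card = n + 1)
    (hOV : (some ωt : Cell V) ∈ OV C rslt ω₀)
    (hSV : (some ωt : Cell V) ∉ SV C rlev τ₀ ω₀ ε) :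
    ∃ τt : Finset V, τt ∈ C.X ∧ τt.card = n ∧ rslt τ₀ τt ∧
      rlev τ₀ ≤ rlev τt ∧ rlev τt < rlev τ₀ + ε ∧
      (some ωt : Cell V) ∉ KV C (Egt C rslt τt) (some ω₀) ∧
      (some ωt : Cell V) ∈ KV C (Ege C rslt τt) (some ω₀) :=
  exists_critical_edge_general C rlev rslt hr τ₀ ω₀ hpair ε ωt hOV hSV

end StableVol
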